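/- For all groves A and B of planar binary trees with B of positive degree, the reflection involution is multiplicative: σ(A × B) = σ(A) × σ(B). -/

import Mathlib

/-!
σ reverses the Tamari order and exchanges `over` with `under`, so it maps the interval
`x + y = [x/y, x\y]` onto `σy + σx`, and hence exchanges left and right sums:
`σ(x ⊣ y) = σy ⊢ σx`. Applying σ to the recursion `(xˡ ∨ xʳ) × B = ((xˡ × B) ⊢ B) ⊣ (xʳ × B)`
and using induction gives `(σxʳ × σB) ⊢ (σB ⊣ (σxˡ × σB))`. The mixed associativity
`X ⊢ (Y ⊣ Z) = (X ⊢ Y) ⊣ Z` turns this into the recursion for `σ(xˡ ∨ xʳ) × σB`; it holds as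
long as the leaf is not in `Y`, which is where the positive degree of `B` is needed.
-/

/-- A planar binary tree: a leaf `|` or a grafting `x ∨ y`. -/
inductive PBT : Type
  | leaf : PBT
  | node : PBT → PBT → PBT
  deriving DecidableEq

namespace PBT

/-- The degree: number of internal vertices. -/
def deg : PBT → ℕ
  | leaf => 0
  | node l r => deg l + deg r + 1

/-- The set `Y n` of planar binary trees of degree `n`. -/
def Y (n : ℕ) : Set PBT := {t | t.deg = n}

/-- The `over` operation `x / y`. -/
def pbtOver : PBT → PBT → PBT
  | x, leaf => x
  | x, node yl yr => node (pbtOver x yl) yr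

/-- The `under` operation `x \ y`. -/
def under : PBT → PBT → PBT
  | leaf, y => y
  | node xl xr, y => node xl (under xr y)

/-- The Tamari order, generated by `(x ∨ y) ∨ z ≤ x ∨ (y ∨ z)` and compatibility
with grafting on both sides. -/
inductive tle : PBT → PBT → Prop
  | refl (x : PBT) : tle x x
  | trans {x y z : PBT} : tle x y → tle y z → tle x z
  | rotate (x y z : PBT) : tle (node (node x y) z) (node x (node y z))
  | node_left {x y : PBT} (z : PBT) : tle x y → tle (node x z) (node y z)
  | node_right {x y : PBT} (z : PBT) : tle x y → tle (node z x) (node z y)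

/-- The sum of two planar binary trees: the Tamari interval `[x/y, x\y]`
(a subset of `Y (deg x + deg y)`). -/
def sum (x y : PBT) : Set PBT := {z | tle (pbtOver x y) z ∧ tle z (under x y)}

/-- A grove of degree `n`: a nonempty subset of `Y n`. -/
def Grove (n : ℕ) (A : Set PBT) : Prop := A.Nonempty ∧ ∀ x ∈ A, x.deg = n

/-- The sum of groves. -/
def gsum (A B : Set PBT) : Set PBT := ⋃ x ∈ A, ⋃ y ∈ B, sum x y

/-- The reflection involution σ. -/
def σ : PBT → PBT
  | leaf => leaf
  | node l r => node (σ r) (σ l)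

/-- The left sum `x ⊣ y` of trees (with the conventions `x ⊣ | = {x}`, `| ⊣ y = {|}`). -/
def lsum : PBT → PBT → Set PBT
  | x, leaf => {x}
  | leaf, _ => {leaf}
  | node xl xr, y => (fun z => node xl z) '' sum xr y

/-- The right sum `x ⊢ y` of trees (with the conventions `| ⊢ y = {y}`, `x ⊢ | = {|}`). -/
def rsum : PBT → PBT → Set PBT
  | leaf, y => {y}
  | _, leaf => {leaf}
  | x, node yl yr => (fun z => node z yr) '' sum x yl

/-- Left sum of groves. -/
def glsum (A B : Set PBT) : Set PBT := ⋃ x ∈ A, ⋃ y ∈ B, lsum x y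

/-- Right sum of groves. -/
def grsum (A B : Set PBT) : Set PBT := ⋃ x ∈ A, ⋃ y ∈ B, rsum x y

/-- Multiplication of a tree by a grove:
`| × B = {|}` and `(xˡ ∨ xʳ) × B = ((xˡ × B) ⊢ B) ⊣ (xʳ × B)`.
(The conventions `{|} ⊢ B = B` and `A ⊣ {|} = A` are built into `rsum`/`lsum`.) -/
def tmul : PBT → Set PBT → Set PBT
  | leaf, _ => {leaf}
  | node l r, B => glsum (grsum (tmul l B) B) (tmul r B)

/-- Multiplication of groves. -/
def gmul (A B : Set PBT) : Set PBT := ⋃ x ∈ A, tmul x B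

end PBT

namespace PBT

theorem σ_involutive : Function.Involutive σ
  | leaf => rfl
  | node l r => by rw [σ, σ, σ_involutive l, σ_involutive r]

theorem σ_ne_leaf {y : PBT} (hy : y ≠ leaf) : σ y ≠ leaf := by
  cases y with
  | leaf => exact absurd rfl hy
  | node => exact PBT.noConfusion

theorem σ_pbtOver (x : PBT) : ∀ y : PBT, σ (pbtOver x y) = under (σ y) (σ x)
  | leaf => rfl
  | node yl yr => by simp only [pbtOver, σ, under, σ_pbtOver x yl]

theorem σ_under (y : PBT) : ∀ x : PBT, σ (under x y) = pbtOver (σ y) (σ x)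
  | leaf => rfl
  | node xl xr => by simp only [under, σ, pbtOver, σ_under y xr]

theorem tle.σ {x y : PBT} (h : tle x y) : tle (σ y) (σ x) := by
  induction h with
  | refl => exact tle.refl _
  | trans _ _ ih₁ ih₂ => exact ih₂.trans ih₁
  | rotate => exact tle.rotate _ _ _
  | node_left _ _ ih => exact ih.node_right _
  | node_right _ _ ih => exact ih.node_left _

theorem tle_σ_iff {x y : PBT} : tle (σ x) (σ y) ↔ tle y x :=
  ⟨fun h => σ_involutive x ▸ σ_involutive y ▸ h.σ, tle.σ⟩

theorem σ_image_sum (x y : PBT) : σ '' sum x y = sum (σ y) (σ x) := by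
  ext z
  rw [σ_involutive.image_eq_preimage_symm]
  change tle _ (σ z) ∧ tle (σ z) _ ↔ tle _ z ∧ tle z _
  rw [← @tle_σ_iff (σ z), ← @tle_σ_iff _ (σ z), σ_involutive z, σ_pbtOver, σ_under, and_comm]

theorem σ_image_lsum : ∀ x y : PBT, σ '' lsum x y = rsum (σ y) (σ x)
  | x, leaf => by simp [lsum, rsum, σ]
  | leaf, node _ _ => by simp [lsum, rsum, σ]
  | node xl xr, node yl yr => by
      have hsum := σ_image_sum xr (node yl yr)
      simp only [σ] at hsum
      simp only [lsum, rsum, σ, ← hsum, Set.image_image]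

theorem σ_image_rsum (x y : PBT) : σ '' rsum x y = lsum (σ y) (σ x) := by
  have h := σ_image_lsum (σ y) (σ x)
  rw [σ_involutive x, σ_involutive y] at h
  rw [← h, σ_involutive.leftInverse.image_image]

theorem σ_image_glsum (A B : Set PBT) : σ '' glsum A B = grsum (σ '' B) (σ '' A) := by
  simp only [glsum, grsum, Set.image_iUnion₂, Set.biUnion_image, σ_image_lsum]
  exact Set.iUnion₂_comm _

theorem σ_image_grsum (A B : Set PBT) : σ '' grsum A B = glsum (σ '' B) (σ '' A) := by
  simp only [glsum, grsum, Set.image_iUnion₂, Set.biUnion_image, σ_image_rsum]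
  exact Set.iUnion₂_comm _

theorem rsum_lsum_assoc (x z : PBT) {y : PBT} (hy : y ≠ leaf) :
    ⋃ w ∈ lsum y z, rsum x w = ⋃ v ∈ rsum x y, lsum v z := by
  obtain ⟨yl, yr, rfl⟩ : ∃ yl yr, y = node yl yr := by
    cases y with
    | leaf => exact absurd rfl hy
    | node yl yr => exact ⟨yl, yr, rfl⟩
  cases x with
  | leaf => simp [rsum]
  | node xl xr =>
    cases z with
    | leaf => simp [lsum]
    | node zl zr =>
      simp only [lsum, rsum, Set.biUnion_image]
      rw [Set.iUnion_image_right, Set.iUnion_image_left]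

theorem grsum_glsum_assoc (X Y Z : Set PBT) (hY : ∀ y ∈ Y, y ≠ leaf) :
    grsum X (glsum Y Z) = glsum (grsum X Y) Z := by
  simp only [glsum, grsum, Set.biUnion_iUnion]
  refine Set.iUnion₂_congr fun x _ => Set.iUnion₂_congr fun y hy => ?_
  simp_rw [rsum_lsum_assoc x _ (hY y hy)]
  exact Set.iUnion₂_comm _

theorem σ_image_tmul {B : Set PBT} (hB : ∀ y ∈ B, y ≠ leaf) :
    ∀ x : PBT, σ '' tmul x B = tmul (σ x) (σ '' B)
  | leaf => by simp [tmul, σ]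
  | node l r => by
    have hσB : ∀ y ∈ σ '' B, y ≠ leaf := by
      rintro _ ⟨y, hy, rfl⟩
      exact σ_ne_leaf (hB y hy)
    rw [tmul, σ, tmul, σ_image_glsum, σ_image_grsum, σ_image_tmul hB l, σ_image_tmul hB r,
      grsum_glsum_assoc _ _ _ hσB]

theorem σ_image_gmul (A : Set PBT) {B : Set PBT} (hB : ∀ y ∈ B, y ≠ leaf) :
    σ '' gmul A B = gmul (σ '' A) (σ '' B) := by
  simp only [gmul, Set.image_iUnion₂, Set.biUnion_image, σ_image_tmul hB]

end PBT

open PBT in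
theorem sigma_gmul_general (m : ℕ) (hm : 0 < m) (A B : Set PBT)
    (hB : Grove m B) :
    σ '' gmul A B = gmul (σ '' A) (σ '' B) := by
  refine σ_image_gmul A fun y hy hleaf => ?_
  have hdeg := hB.2 y hy
  rw [hleaf, deg] at hdeg
  omega

open PBT in
/-- the reflection involution is multiplicative:
`σ(A × B) = σ(A) × σ(B)`. -/
theorem sigma_gmul (n m : ℕ) (hm : 0 < m) (A B : Set PBT)
    (hA : Grove n A) (hB : Grove m B) :
    σ '' gmul A B = gmul (σ '' A) (σ '' B) :=
  sigma_gmul_general m hm A B hB
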